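/- arXiv:2602.04714 — 3 statements merged into one kernel-verified Lean document; each statement's English description precedes it below -/
import Mathlib

section
/- Let X be a nonnegative integrable random variable on a probability space (Ω, ℱ, ℙ) and fix c ∈ (0,1). Let τ_c = inf{ v ∈ ℝ : ℙ(X < v) ≥ c }, let κ = 0 if ℙ(X = τ_c) = 0 and κ = (c − ℙ(X < τ_c)) / ℙ(X = τ_c) otherwise, and set a* = 1{X < τ_c} + κ·1{X = τ_c}. Then for every measurable function a : Ω → [0,1] with 𝔼[a] = c, one has 𝔼[X·a*] ≤ 𝔼[X·a]. (Neyman–Pearson-type step: among all randomized acceptance rules with coverage exactly c, the randomized threshold rule on X minimizes the accepted expected loss.) -/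
/-!
If `a` takes values in `[0,1]` and `a*` is `1` below `τ` and `0` above it, then
`(X - τ) (a - a*) ≥ 0` pointwise; integrating gives
`𝔼[X a] - 𝔼[X a*] ≥ τ (𝔼[a] - 𝔼[a*])`, which vanishes once `a*` also has coverage `c`.
It does: `v ↦ ℙ(X < v)` is left-continuous with right limit `ℙ(X ≤ v)`, so at the quantile
`ℙ(X < τ) ≤ c ≤ ℙ(X < τ) + ℙ(X = τ)`, and `κ ∈ [0,1]` fills exactly the gap.
-/

open MeasureTheory Set Filter Topology

section LevelSet

variable {α β : Type*} [ConditionallyCompleteLinearOrder α] [TopologicalSpace α]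
  [LinearOrder β] [TopologicalSpace β] [OrderClosedTopology β] {F : α → β} {c L : β}

theorem le_of_tendsto_nhdsLT_sInf_setOf_le [(𝓝[<] sInf {v | c ≤ F v}).NeBot]
    (hS : BddBelow {v | c ≤ F v}) (hF : Tendsto F (𝓝[<] sInf {v | c ≤ F v}) (𝓝 L)) : L ≤ c :=
  le_of_tendsto hF <| eventually_nhdsWithin_of_forall fun _ hv ↦
    (not_le.1 fun hcv ↦ not_le.2 hv (csInf_le hS hcv)).le

theorem le_of_tendsto_nhdsGT_sInf_setOf_le [(𝓝[>] sInf {v | c ≤ F v}).NeBot]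
    (hF_mono : Monotone F) (hS : {v | c ≤ F v}.Nonempty)
    (hF : Tendsto F (𝓝[>] sInf {v | c ≤ F v}) (𝓝 L)) : c ≤ L :=
  ge_of_tendsto hF <| eventually_nhdsWithin_of_forall fun _ hv ↦
    let ⟨_, hcu, huv⟩ := exists_lt_of_csInf_lt hS hv
    hcu.trans (hF_mono huv.le)

end LevelSet

noncomputable def tieBreakProb (c F p : ℝ) : ℝ :=
  if p = 0 then 0 else (c - F) / p

theorem add_tieBreakProb_mul {c F p : ℝ} (hF : F ≤ c) (hc : c ≤ F + p) :
    F + tieBreakProb c F p * p = c := by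
  unfold tieBreakProb
  split_ifs with hp
  · subst hp
    linarith
  · rw [div_mul_cancel₀ _ hp]
    ring

theorem tieBreakProb_mem_Icc {c F p : ℝ} (hp : 0 ≤ p) (hF : F ≤ c) (hc : c ≤ F + p) :
    tieBreakProb c F p ∈ Icc 0 1 := by
  unfold tieBreakProb
  split_ifs with hp0
  · exact ⟨le_rfl, zero_le_one⟩
  · have hp' : 0 < p := lt_of_le_of_ne hp (Ne.symm hp0)
    exact ⟨div_nonneg (sub_nonneg.2 hF) hp, (div_le_one hp').2 (by linarith)⟩

namespace MeasureTheory

section Distribution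

variable {Ω : Type*} [MeasurableSpace Ω] {μ : Measure Ω}

theorem tendsto_measure_biUnion_lt {ι : Type*} [LinearOrder ι] [TopologicalSpace ι]
    [OrderTopology ι] [FirstCountableTopology ι] {s : ι → Set Ω} {a : ι}
    (hm : ∀ i j, i ≤ j → j < a → s i ⊆ s j) :
    Tendsto (μ ∘ s) (𝓝[<] a) (𝓝 (μ (⋃ r < a, s r))) := by
  by_cases ha : Order.IsSuccPrelimit a
  · have : (atTop : Filter (Iio a)).IsCountablyGenerated := by
      rw [← comap_coe_Iio_nhdsLT a ha]
      infer_instance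
    simp_rw [← map_coe_Iio_atTop a ha, tendsto_map'_iff, ← mem_Iio, biUnion_eq_iUnion]
    exact tendsto_measure_iUnion_atTop fun i j h ↦ hm i j h j.2
  · rw [Order.not_isSuccPrelimit_iff] at ha
    rcases ha with ⟨b, hba⟩
    simp [hba.nhdsLT]

variable {X : Ω → ℝ}

theorem tendsto_measure_lt_atTop :
    Tendsto (fun v ↦ μ {ω | X ω < v}) atTop (𝓝 (μ univ)) := by
  have hU : ⋃ v : ℝ, {ω | X ω < v} = univ :=
    eq_univ_of_forall fun ω ↦ mem_iUnion.2 (exists_gt (X ω))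
  rw [← hU]
  exact tendsto_measure_iUnion_atTop fun u v huv ω hω ↦ lt_of_lt_of_le hω huv

theorem tendsto_measure_lt_atBot [IsFiniteMeasure μ] (hX : Measurable X) :
    Tendsto (fun v ↦ μ {ω | X ω < v}) atBot (𝓝 0) := by
  have hI : ⋂ v : ℝ, {ω | X ω < v} = ∅ :=
    eq_empty_of_forall_notMem fun ω hω ↦ lt_irrefl (X ω) (mem_iInter.1 hω (X ω))
  rw [← measure_empty (μ := μ), ← hI]
  exact tendsto_measure_iInter_atBot (fun v ↦ (hX measurableSet_Iio).nullMeasurableSet)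
    (fun u v huv ω hω ↦ lt_of_lt_of_le hω huv) ⟨0, measure_ne_top μ _⟩

theorem tendsto_measure_lt_nhdsLT (τ : ℝ) :
    Tendsto (fun v ↦ μ {ω | X ω < v}) (𝓝[<] τ) (𝓝 (μ {ω | X ω < τ})) := by
  have hU : ⋃ v < τ, {ω | X ω < v} = {ω | X ω < τ} := by
    ext ω
    simp only [mem_iUnion, mem_ofPred_eq, exists_prop]
    exact ⟨fun ⟨v, hvτ, hXv⟩ ↦ hXv.trans hvτ, fun h ↦ (exists_between h).imp fun v h ↦ h.symm⟩
  rw [← hU]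
  exact tendsto_measure_biUnion_lt fun u v huv _ ω hω ↦ lt_of_lt_of_le hω huv

theorem tendsto_measure_lt_nhdsGT [IsFiniteMeasure μ] (hX : Measurable X) (τ : ℝ) :
    Tendsto (fun v ↦ μ {ω | X ω < v}) (𝓝[>] τ) (𝓝 (μ {ω | X ω ≤ τ})) := by
  have hI : ⋂ v > τ, {ω | X ω < v} = {ω | X ω ≤ τ} := by
    ext ω
    simp only [mem_iInter, mem_ofPred_eq]
    exact ⟨fun h ↦ le_of_forall_gt fun v hv ↦ h v hv, fun h v hv ↦ h.trans_lt hv⟩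
  rw [← hI]
  exact tendsto_measure_biInter_gt (fun v _ ↦ (hX measurableSet_Iio).nullMeasurableSet)
    (fun u v _ huv ω hω ↦ lt_of_lt_of_le hω huv) ⟨τ + 1, by simp, measure_ne_top μ _⟩

end Distribution

section Quantile

variable {Ω : Type*} [MeasurableSpace Ω] {μ : Measure Ω} [IsFiniteMeasure μ] {X : Ω → ℝ}
  {c : ℝ}

noncomputable def lowerQuantile (μ : Measure Ω) (X : Ω → ℝ) (c : ℝ) : ℝ :=
  sInf {v | c ≤ μ.real {ω | X ω < v}}

theorem monotone_measureReal_lt : Monotone fun v ↦ μ.real {ω | X ω < v} :=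
  fun _ _ huv ↦ measureReal_mono fun _ hω ↦ lt_of_lt_of_le hω huv

theorem bddBelow_setOf_le_measureReal_lt (hX : Measurable X) (hc : 0 < c) :
    BddBelow {v | c ≤ μ.real {ω | X ω < v}} := by
  have hlim : Tendsto (fun v ↦ μ.real {ω | X ω < v}) atBot (𝓝 0) := by
    have h := (ENNReal.tendsto_toReal ENNReal.zero_ne_top).comp
      (tendsto_measure_lt_atBot (μ := μ) hX)
    rwa [ENNReal.toReal_zero] at h
  obtain ⟨v₀, hv₀⟩ := eventually_atBot.1 (hlim.eventually (gt_mem_nhds hc))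
  exact ⟨v₀, fun v hcv ↦ le_of_not_ge fun hvv₀ ↦ (hv₀ v hvv₀).not_ge hcv⟩

theorem nonempty_setOf_le_measureReal_lt (hc : c < μ.real univ) :
    {v | c ≤ μ.real {ω | X ω < v}}.Nonempty :=
  ((((ENNReal.tendsto_toReal (measure_ne_top μ _)).comp
    tendsto_measure_lt_atTop).eventually (lt_mem_nhds hc)).exists).imp fun _ h ↦ h.le

theorem measureReal_le_eq_add (hX : Measurable X) (τ : ℝ) :
    μ.real {ω | X ω ≤ τ} = μ.real {ω | X ω < τ} + μ.real {ω | X ω = τ} := by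
  have hunion : {ω | X ω ≤ τ} = {ω | X ω < τ} ∪ {ω | X ω = τ} := by
    ext ω
    simp [le_iff_lt_or_eq]
  have hdisj : Disjoint {ω | X ω < τ} {ω | X ω = τ} :=
    disjoint_left.2 fun _ hlt heq ↦ hlt.ne heq
  rw [hunion, measureReal_union hdisj (hX (measurableSet_singleton τ))]

theorem measureReal_lt_lowerQuantile_le (hX : Measurable X) (hc : 0 < c) :
    μ.real {ω | X ω < lowerQuantile μ X c} ≤ c :=
  le_of_tendsto_nhdsLT_sInf_setOf_le (bddBelow_setOf_le_measureReal_lt hX hc)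
    ((ENNReal.tendsto_toReal (measure_ne_top μ _)).comp (tendsto_measure_lt_nhdsLT _))

theorem le_measureReal_le_lowerQuantile (hX : Measurable X) (hc : c < μ.real univ) :
    c ≤ μ.real {ω | X ω ≤ lowerQuantile μ X c} :=
  le_of_tendsto_nhdsGT_sInf_setOf_le monotone_measureReal_lt
    (nonempty_setOf_le_measureReal_lt hc)
    ((ENNReal.tendsto_toReal (measure_ne_top μ _)).comp (tendsto_measure_lt_nhdsGT hX _))

end Quantile

section ThresholdRule

variable {Ω : Type*} {X : Ω → ℝ} {τ κ : ℝ}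

noncomputable def thresholdRule (X : Ω → ℝ) (τ κ : ℝ) (ω : Ω) : ℝ :=
  (if X ω < τ then 1 else 0) + κ * (if X ω = τ then 1 else 0)

theorem thresholdRule_mem_Icc (hκ : κ ∈ Icc 0 1) (ω : Ω) : thresholdRule X τ κ ω ∈ Icc 0 1 := by
  unfold thresholdRule
  split_ifs with hlt heq heq
  · exact absurd heq hlt.ne
  · simp
  · simpa using hκ
  · simp

theorem sub_mul_sub_thresholdRule_nonneg {a : ℝ} (ha : a ∈ Icc 0 1) (ω : Ω) :
    0 ≤ (X ω - τ) * (a - thresholdRule X τ κ ω) := by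
  rcases lt_trichotomy (X ω) τ with h | h | h
  · have : thresholdRule X τ κ ω = 1 := by simp [thresholdRule, h, h.ne]
    rw [this]
    exact mul_nonneg_of_nonpos_of_nonpos (by linarith) (by linarith [ha.2])
  · simp [h]
  · have : thresholdRule X τ κ ω = 0 := by simp [thresholdRule, h.not_gt, h.ne']
    rw [this]
    exact mul_nonneg (by linarith) (by linarith [ha.1])

theorem thresholdRule_eq_indicator (X : Ω → ℝ) (τ κ : ℝ) :
    thresholdRule X τ κ =
      fun ω ↦ {ω | X ω < τ}.indicator 1 ω + κ * {ω | X ω = τ}.indicator 1 ω := by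
  ext ω
  simp [thresholdRule, indicator_apply]

variable [MeasurableSpace Ω] {μ : Measure Ω}

theorem measurable_thresholdRule (hX : Measurable X) : Measurable (thresholdRule X τ κ) := by
  rw [thresholdRule_eq_indicator]
  exact (measurable_const.indicator (hX measurableSet_Iio)).add
    ((measurable_const.indicator (hX (measurableSet_singleton τ))).const_mul κ)

theorem integral_thresholdRule [IsFiniteMeasure μ] (hX : Measurable X) :
    ∫ ω, thresholdRule X τ κ ω ∂μ = μ.real {ω | X ω < τ} + κ * μ.real {ω | X ω = τ} := by
  have hlt : MeasurableSet {ω | X ω < τ} := hX measurableSet_Iio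
  have heq : MeasurableSet {ω | X ω = τ} := hX (measurableSet_singleton τ)
  have hlt_int : Integrable ({ω | X ω < τ}.indicator (1 : Ω → ℝ)) μ :=
    (integrable_const 1).indicator hlt
  have heq_int : Integrable ({ω | X ω = τ}.indicator (1 : Ω → ℝ)) μ :=
    (integrable_const 1).indicator heq
  simp only [thresholdRule_eq_indicator]
  rw [integral_add hlt_int (heq_int.const_mul κ), integral_const_mul,
    integral_indicator_one hlt, integral_indicator_one heq]

theorem integral_mul_le_integral_mul_of_sub_mul_sub_nonneg [IsFiniteMeasure μ] {a b : Ω → ℝ}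
    (hX : Integrable X μ) (ha : AEStronglyMeasurable a μ) (hb : AEStronglyMeasurable b μ)
    (ha01 : ∀ᵐ ω ∂μ, a ω ∈ Icc 0 1) (hb01 : ∀ᵐ ω ∂μ, b ω ∈ Icc 0 1)
    (hab : ∫ ω, a ω ∂μ = ∫ ω, b ω ∂μ) (h : ∀ᵐ ω ∂μ, 0 ≤ (X ω - τ) * (a ω - b ω)) :
    ∫ ω, X ω * b ω ∂μ ≤ ∫ ω, X ω * a ω ∂μ := by
  have hbound {f : Ω → ℝ} (hf : ∀ᵐ ω ∂μ, f ω ∈ Icc 0 1) : ∀ᵐ ω ∂μ, ‖f ω‖ ≤ 1 :=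
    hf.mono fun ω h ↦ by rw [Real.norm_eq_abs, abs_le]; constructor <;> linarith [h.1, h.2]
  have ha_int := Integrable.of_bound ha 1 (hbound ha01)
  have hb_int := Integrable.of_bound hb 1 (hbound hb01)
  have hXa_int := hX.mul_bdd ha (hbound ha01)
  have hXb_int := hX.mul_bdd hb (hbound hb01)
  have hXab : Integrable (fun ω ↦ X ω * a ω - X ω * b ω) μ := hXa_int.sub hXb_int
  have hτab : Integrable (fun ω ↦ τ * a ω - τ * b ω) μ :=
    (ha_int.const_mul τ).sub (hb_int.const_mul τ)
  have hsplit : ∫ ω, (X ω - τ) * (a ω - b ω) ∂μ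
      = (∫ ω, X ω * a ω ∂μ - ∫ ω, X ω * b ω ∂μ) - τ * (∫ ω, a ω ∂μ - ∫ ω, b ω ∂μ) := by
    simp_rw [sub_mul, mul_sub]
    rw [integral_sub hXab hτab, integral_sub hXa_int hXb_int,
      integral_sub (ha_int.const_mul τ) (hb_int.const_mul τ), integral_const_mul,
      integral_const_mul]
  have := integral_nonneg_of_ae h
  rw [hsplit, hab] at this
  linarith

end ThresholdRule

end MeasureTheory

theorem randomized_threshold_minimizes_accepted_loss_general
    {Ω : Type*} [MeasurableSpace Ω] (μ : Measure Ω) [IsProbabilityMeasure μ]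
    (X : Ω → ℝ) (hX : Measurable X) (hXint : Integrable X μ)
    (c : ℝ) (hc0 : 0 < c) (hc1 : c < 1)
    (τ κ : ℝ)
    (hτ : τ = sInf {v : ℝ | c ≤ (μ {ω | X ω < v}).toReal})
    (hκ : κ = if (μ {ω | X ω = τ}).toReal = 0 then 0
          else (c - (μ {ω | X ω < τ}).toReal) / (μ {ω | X ω = τ}).toReal)
    (astar : Ω → ℝ)
    (hastar : astar = fun ω =>
      (if X ω < τ then (1 : ℝ) else 0) + κ * (if X ω = τ then (1 : ℝ) else 0)) :
    ∀ a : Ω → ℝ, Measurable a → (∀ ω, a ω ∈ Set.Icc (0 : ℝ) 1) →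
      (∫ ω, a ω ∂μ) = c →
      ∫ ω, X ω * astar ω ∂μ ≤ ∫ ω, X ω * a ω ∂μ := by
  intro a ha ha01 hac
  replace hτ : τ = lowerQuantile μ X c := hτ
  replace hκ : κ = tieBreakProb c (μ.real {ω | X ω < τ}) (μ.real {ω | X ω = τ}) := hκ
  replace hastar : astar = thresholdRule X τ κ := hastar
  have hlt : μ.real {ω | X ω < τ} ≤ c := hτ ▸ measureReal_lt_lowerQuantile_le hX hc0
  have hle : c ≤ μ.real {ω | X ω < τ} + μ.real {ω | X ω = τ} := by
    rw [← measureReal_le_eq_add hX, hτ]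
    exact le_measureReal_le_lowerQuantile hX (by simpa using hc1)
  have hκ01 : κ ∈ Icc 0 1 := hκ ▸ tieBreakProb_mem_Icc measureReal_nonneg hlt hle
  have hcov : ∫ ω, astar ω ∂μ = c := by
    rw [hastar, integral_thresholdRule hX, hκ, add_tieBreakProb_mul hlt hle]
  subst hastar
  exact integral_mul_le_integral_mul_of_sub_mul_sub_nonneg hXint ha.aestronglyMeasurable
    (measurable_thresholdRule hX).aestronglyMeasurable (ae_of_all _ ha01)
    (ae_of_all _ (thresholdRule_mem_Icc hκ01)) (hac.trans hcov.symm)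
    (ae_of_all _ fun ω ↦ sub_mul_sub_thresholdRule_nonneg (ha01 ω) ω)

/-- **Neyman–Pearson-type step.** Let `X` be a nonnegative integrable random variable on a
probability space `(Ω, ℱ, ℙ)` and `c ∈ (0,1)`. With `τ_c = inf {v : ℙ(X < v) ≥ c}`,
tie-breaking probability `κ` (equal to `0` if `ℙ(X = τ_c) = 0` and to
`(c - ℙ(X < τ_c)) / ℙ(X = τ_c)` otherwise), and randomized threshold rule
`a* = 1{X < τ_c} + κ·1{X = τ_c}`, we have: for every measurable `a : Ω → [0,1]` with
`𝔼[a] = c`, `𝔼[X·a*] ≤ 𝔼[X·a]`. That is, among all randomized acceptance rules with coverage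
exactly `c`, the randomized threshold rule on `X` minimizes the accepted expected loss. -/
theorem randomized_threshold_minimizes_accepted_loss
    {Ω : Type*} [MeasurableSpace Ω] (μ : Measure Ω) [IsProbabilityMeasure μ]
    (X : Ω → ℝ) (hX : Measurable X) (hX0 : ∀ ω, 0 ≤ X ω) (hXint : Integrable X μ)
    (c : ℝ) (hc0 : 0 < c) (hc1 : c < 1)
    (τ κ : ℝ)
    (hτ : τ = sInf {v : ℝ | c ≤ (μ {ω | X ω < v}).toReal})
    (hκ : κ = if (μ {ω | X ω = τ}).toReal = 0 then 0
          else (c - (μ {ω | X ω < τ}).toReal) / (μ {ω | X ω = τ}).toReal)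
    (astar : Ω → ℝ)
    (hastar : astar = fun ω =>
      (if X ω < τ then (1 : ℝ) else 0) + κ * (if X ω = τ then (1 : ℝ) else 0)) :
    ∀ a : Ω → ℝ, Measurable a → (∀ ω, a ω ∈ Set.Icc (0 : ℝ) 1) →
      (∫ ω, a ω ∂μ) = c →
      ∫ ω, X ω * astar ω ∂μ ≤ ∫ ω, X ω * a ω ∂μ :=
  randomized_threshold_minimizes_accepted_loss_general μ X hX hXint c hc0 hc1 τ κ hτ hκ astar hastar
end

section
/- Let (Ω, ℱ, ℙ) be a probability space, 𝒢 ⊆ ℱ a sub-σ-algebra, H ≥ 1 an integer, and ℓ_1, …, ℓ_H : Ω → ℝ nonnegative integrable random variables. Set ρ_t = 𝔼[ℓ_t | 𝒢] and S_e = Σ_{t=1}^e ρ_t for e ∈ {0, …, H} (S_0 = 0). Fix a target coverage c ∈ (0,1]. Suppose e* : Ω → {0, …, H} is a 𝒢-measurable selection and η* ≥ 0 is a real number such that, with λ* = 𝔼[Σ_{t=1}^{e*} ℓ_t] / 𝔼[e*] (assume 𝔼[e*] > 0) and γ* = λ* + η*, the following hold: (i) almost surely, e*(ω) minimizes e ↦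 S_e(ω) − γ*·e over e ∈ {0, …, H}; (ii) 𝔼[e*] ≥ cH; (iii) η*·(𝔼[e*] − cH) = 0. Then for every 𝒢-measurable selection e : Ω → {0, …, H} with 𝔼[e] ≥ cH, one has λ* ≤ 𝔼[Σ_{t=1}^{e} ℓ_t] / 𝔼[e]. (Optimality of the partial-abstention selection function: a selection that pointwise minimizes the cumulative conditional risk minus a linear reward γ* per accepted step, and satisfies the Karush–Kuhn–Tucker conditions for the coverage constraint, achieves minimal selective risk.) -/
open MeasureTheory

private lemma sum_Icc_ite_aux {H e : ℕ} (he : e ≤ H) (f : ℕ → ℝ) :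
    ∑ t ∈ Finset.Icc 1 e, f t = ∑ t ∈ Finset.Icc 1 H, if t ≤ e then f t else 0 := by
  rw [← Finset.sum_filter]
  congr 1
  ext t
  simp only [Finset.mem_filter, Finset.mem_Icc]
  omega

/-- **Optimality of the partial-abstention selection function (Theorem 2).**
Let `(Ω, ℱ, ℙ)` be a probability space, `𝒢 ⊆ ℱ` a sub-σ-algebra (`m ≤ mΩ`), `H ≥ 1`, and
`ℓ_1, …, ℓ_H : Ω → ℝ` nonnegative integrable losses. Set `ρ_t = 𝔼[ℓ_t | 𝒢]` and
`S e = ∑_{t=1}^e ρ_t` for `e ∈ {0, …, H}` (so `S 0 = 0`). Fix a target coverage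
`c ∈ (0,1]`. Suppose `e* : Ω → {0, …, H}` is a `𝒢`-measurable selection and `η* ≥ 0` is such
that, with `λ* = 𝔼[∑_{t=1}^{e*} ℓ_t] / 𝔼[e*]` (assuming `𝔼[e*] > 0`) and `γ* = λ* + η*`:
(i) almost surely, `e*(ω)` minimizes `e ↦ S e ω - γ* * e` over `e ∈ {0, …, H}`;
(ii) `𝔼[e*] ≥ cH`; (iii) `η* * (𝔼[e*] - cH) = 0`. Then for every `𝒢`-measurable selection
`e : Ω → {0, …, H}` with `𝔼[e] ≥ cH`, `λ* ≤ 𝔼[∑_{t=1}^{e} ℓ_t] / 𝔼[e]`. -/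
theorem partial_abstention_optimal
    {Ω : Type*} {mΩ : MeasurableSpace Ω} (μ : Measure Ω) [IsProbabilityMeasure μ]
    (m : MeasurableSpace Ω) (hm : m ≤ mΩ)
    (H : ℕ) (hH : 1 ≤ H)
    (ℓ : ℕ → Ω → ℝ)
    (hnonneg : ∀ t ∈ Finset.Icc 1 H, ∀ ω, 0 ≤ ℓ t ω)
    (hint : ∀ t ∈ Finset.Icc 1 H, Integrable (ℓ t) μ)
    (c : ℝ) (hc0 : 0 < c) (hc1 : c ≤ 1)
    (S : ℕ → Ω → ℝ)
    (hS : S = fun e ω => ∑ t ∈ Finset.Icc 1 e, (μ[ℓ t | m]) ω)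
    (estar : Ω → ℕ)
    (hestar_meas : Measurable[m] estar)
    (hestar_le : ∀ ω, estar ω ≤ H)
    (hcovpos : 0 < ∫ ω, (estar ω : ℝ) ∂μ)
    (ηstar lamstar γstar : ℝ)
    (hη : 0 ≤ ηstar)
    (hlam : lamstar
      = (∫ ω, ∑ t ∈ Finset.Icc 1 (estar ω), ℓ t ω ∂μ) / ∫ ω, (estar ω : ℝ) ∂μ)
    (hγ : γstar = lamstar + ηstar)
    (hmin : ∀ᵐ ω ∂μ, ∀ e ≤ H,
      S (estar ω) ω - γstar * (estar ω : ℝ) ≤ S e ω - γstar * (e : ℝ))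
    (hcov : c * H ≤ ∫ ω, (estar ω : ℝ) ∂μ)
    (hslack : ηstar * ((∫ ω, (estar ω : ℝ) ∂μ) - c * H) = 0) :
    ∀ e : Ω → ℕ, Measurable[m] e → (∀ ω, e ω ≤ H) →
      c * H ≤ ∫ ω, (e ω : ℝ) ∂μ →
      lamstar ≤ (∫ ω, ∑ t ∈ Finset.Icc 1 (e ω), ℓ t ω ∂μ) / ∫ ω, (e ω : ℝ) ∂μ := by
  -- Main machinery: for any 𝒢-measurable selection e ≤ H, the function
  -- ω ↦ ∑_{t ≤ e ω} ℓ t ω is integrable, ω ↦ S (e ω) ω is integrable, and their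
  -- integrals agree (tower property), and ω ↦ (e ω : ℝ) is integrable.
  have key : ∀ (e : Ω → ℕ), Measurable[m] e → (∀ ω, e ω ≤ H) →
      Integrable (fun ω => ∑ t ∈ Finset.Icc 1 (e ω), ℓ t ω) μ ∧
      Integrable (fun ω => S (e ω) ω) μ ∧
      (∫ ω, S (e ω) ω ∂μ) = ∫ ω, ∑ t ∈ Finset.Icc 1 (e ω), ℓ t ω ∂μ ∧
      Integrable (fun ω => (e ω : ℝ)) μ := by
    intro e hmeas hle
    letI : MeasurableSpace Ω := mΩ
    have hsetm : ∀ t : ℕ, MeasurableSet[m] {ω | t ≤ e ω} := fun t => by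
      have : {ω | t ≤ e ω} = e ⁻¹' (Set.Ici t) := rfl
      rw [this]; exact hmeas measurableSet_Ici
    have hset : ∀ t : ℕ, MeasurableSet[mΩ] {ω | t ≤ e ω} := fun t => hm _ (hsetm t)
    have hrwℓ : (fun ω => ∑ t ∈ Finset.Icc 1 (e ω), ℓ t ω)
        = fun ω => ∑ t ∈ Finset.Icc 1 H, Set.indicator {ω | t ≤ e ω} (ℓ t) ω := by
      funext ω
      rw [sum_Icc_ite_aux (hle ω) (fun t => ℓ t ω)]
      refine Finset.sum_congr rfl fun t _ => ?_
      simp [Set.indicator_apply, Set.mem_setOf_eq]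
    have hrwS : (fun ω => S (e ω) ω)
        = fun ω => ∑ t ∈ Finset.Icc 1 H, Set.indicator {ω | t ≤ e ω} (μ[ℓ t | m]) ω := by
      funext ω
      rw [hS]
      simp only
      rw [sum_Icc_ite_aux (hle ω) (fun t => (μ[ℓ t | m]) ω)]
      refine Finset.sum_congr rfl fun t _ => ?_
      simp [Set.indicator_apply, Set.mem_setOf_eq]
    have hintℓ : ∀ t ∈ Finset.Icc 1 H,
        Integrable (Set.indicator {ω | t ≤ e ω} (ℓ t)) μ := fun t ht =>
      (hint t ht).indicator (hset t)
    have hintS : ∀ t ∈ Finset.Icc 1 H,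
        Integrable (Set.indicator {ω | t ≤ e ω} (μ[ℓ t | m])) μ := fun t _ =>
      (integrable_condExp).indicator (hset t)
    refine ⟨?_, ?_, ?_, ?_⟩
    · rw [hrwℓ]; exact integrable_finset_sum _ hintℓ
    · rw [hrwS]; exact integrable_finset_sum _ hintS
    · rw [hrwℓ, hrwS, integral_finset_sum _ hintS, integral_finset_sum _ hintℓ]
      refine Finset.sum_congr rfl fun t ht => ?_
      rw [integral_indicator (hset t), integral_indicator (hset t)]
      exact setIntegral_condExp hm (hint t ht) (hsetm t)
    · refine Integrable.mono' (integrable_const (H : ℝ)) ?_ ?_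
      · exact ((measurable_from_nat.comp hmeas).mono hm le_rfl).aestronglyMeasurable.congr
          (by filter_upwards with ω; rfl)
      · filter_upwards with ω
        simp only [Real.norm_eq_abs, Nat.abs_cast]
        exact_mod_cast hle ω
  intro e he_meas he_le he_cov
  obtain ⟨hIℓe, hISe, hEe, hIe⟩ := key e he_meas he_le
  obtain ⟨hIℓs, hISs, hEs, hIs⟩ := key estar hestar_meas hestar_le
  set Es := ∫ ω, (estar ω : ℝ) ∂μ with hEsdef
  set Ee := ∫ ω, (e ω : ℝ) ∂μ with hEedef
  have hEepos : 0 < Ee := lt_of_lt_of_le (by positivity) he_cov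
  -- integrate the pointwise minimality
  have hae : ∀ᵐ ω ∂μ, S (estar ω) ω - γstar * (estar ω : ℝ)
      ≤ S (e ω) ω - γstar * (e ω : ℝ) := by
    filter_upwards [hmin] with ω h
    exact h (e ω) (he_le ω)
  have hintegral_le :
      (∫ ω, S (estar ω) ω ∂μ) - γstar * Es ≤ (∫ ω, S (e ω) ω ∂μ) - γstar * Ee := by
    have h1 : ∫ ω, (S (estar ω) ω - γstar * (estar ω : ℝ)) ∂μ
        ≤ ∫ ω, (S (e ω) ω - γstar * (e ω : ℝ)) ∂μ :=
      integral_mono_ae (hISs.sub (hIs.const_mul γstar)) (hISe.sub (hIe.const_mul γstar)) hae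
    rwa [integral_sub hISs (hIs.const_mul γstar), integral_sub hISe (hIe.const_mul γstar),
      integral_const_mul, integral_const_mul] at h1
  have hSs : (∫ ω, S (estar ω) ω ∂μ) = lamstar * Es := by
    rw [hEs, hlam]
    field_simp
  rw [hEe] at hintegral_le
  -- conclude algebraically
  rw [le_div_iff₀ hEepos]
  have hηe : ηstar * Ee ≥ ηstar * (c * H) := mul_le_mul_of_nonneg_left he_cov hη
  subst hγ
  nlinarith [hintegral_le, hSs, hslack, hηe]
end

section
/- Let (Ω, ℱ, ℙ) be a probability space, 𝒢 ⊆ ℱ a sub-σ-algebra, H ≥ 1 an integer, and ℓ_1, …, ℓ_H : Ω → ℝ nonnegative integrable random variables. Set ρ_t = 𝔼[ℓ_t | 𝒢]. Call a pair (s, e) with s ∈ {1, …, H}, e ∈ {0, …, H} admissible if s ≤ e or (s, e) = (1, 0), and write h(s,e) = e − s + 1 for its length (so h(1,0) = 0). Fix a target coverage c ∈ (0,1]. Suppose (s*, e*) : Ω → {1,…,H} × {0,…,H} is a 𝒢-measurable admissible selection and η* ≥ 0 a real number such that, with λ* = 𝔼[Σ_{t=s*}^{e*} ℓ_t] / 𝔼[h(s*,e*)]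 (assume 𝔼[h(s*,e*)] > 0) and γ* = λ* + η*, the following hold: (i) almost surely, (s*(ω), e*(ω)) minimizes (s,e) ↦ Σ_{t=s}^{e} ρ_t(ω) − γ*·(e − s + 1) over all admissible pairs; (ii) 𝔼[h(s*,e*)] ≥ cH; (iii) η*·(𝔼[h(s*,e*)] − cH) = 0. Then for every 𝒢-measurable admissible selection (s, e) with 𝔼[h(s,e)] ≥ cH, one has λ* ≤ 𝔼[Σ_{t=s}^{e} ℓ_t] / 𝔼[h(s,e)]. (Optimality of the interval-abstention selection function via Lagrangian minimization and the Karush–Kuhn–Tucker conditions.) -/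
open MeasureTheory

lemma sum_interval_eq_indicator {Ω : Type*} (H : ℕ) (se : Ω → ℕ × ℕ)
    (hadm : ∀ ω, 1 ≤ (se ω).1 ∧ (se ω).2 ≤ H) (f : ℕ → Ω → ℝ) (ω : Ω) :
    ∑ t ∈ Finset.Icc (se ω).1 (se ω).2, f t ω
      = ∑ t ∈ Finset.Icc 1 H,
          Set.indicator {ω' | (se ω').1 ≤ t ∧ t ≤ (se ω').2} (f t) ω := by
  have h1 : ∀ t, Set.indicator {ω' | (se ω').1 ≤ t ∧ t ≤ (se ω').2} (f t) ω
      = if t ∈ Finset.Icc (se ω).1 (se ω).2 then f t ω else 0 := by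
    intro t
    simp [Set.indicator_apply, Finset.mem_Icc, Set.mem_setOf_eq]
  simp_rw [h1]
  rw [Finset.sum_ite_mem]
  congr 1
  rw [eq_comm, Finset.inter_eq_right]
  intro t ht
  rw [Finset.mem_Icc] at ht ⊢
  exact ⟨le_trans (hadm ω).1 ht.1, le_trans ht.2 (hadm ω).2⟩

lemma len_eq_sum_one {Ω : Type*} (se : Ω → ℕ × ℕ) (ω : Ω) :
    (((se ω).2 + 1 - (se ω).1 : ℕ) : ℝ)
      = ∑ _t ∈ Finset.Icc (se ω).1 (se ω).2, (1 : ℝ) := by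
  rw [Finset.sum_const, Nat.card_Icc]
  simp

lemma integral_facts {Ω : Type*} {mΩ : MeasurableSpace Ω} (μ : Measure Ω)
    [IsProbabilityMeasure μ] {m : MeasurableSpace Ω} (hm : m ≤ mΩ)
    (H : ℕ) (ℓ : ℕ → Ω → ℝ) (hint : ∀ t ∈ Finset.Icc 1 H, Integrable (ℓ t) μ)
    (se : Ω → ℕ × ℕ) (hmeas : Measurable[m] se)
    (hadm : ∀ ω, 1 ≤ (se ω).1 ∧ (se ω).2 ≤ H) :
    Integrable (fun ω => ∑ t ∈ Finset.Icc (se ω).1 (se ω).2, ℓ t ω) μ ∧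
    Integrable (fun ω => ∑ t ∈ Finset.Icc (se ω).1 (se ω).2, (μ[ℓ t | m]) ω) μ ∧
    Integrable (fun ω => (((se ω).2 + 1 - (se ω).1 : ℕ) : ℝ)) μ ∧
    ∫ ω, ∑ t ∈ Finset.Icc (se ω).1 (se ω).2, (μ[ℓ t | m]) ω ∂μ
      = ∫ ω, ∑ t ∈ Finset.Icc (se ω).1 (se ω).2, ℓ t ω ∂μ := by
  set S : ℕ → Set Ω := fun t => {ω' | (se ω').1 ≤ t ∧ t ≤ (se ω').2} with hSdef
  have hS : ∀ t, MeasurableSet[m] (S t) := fun t =>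
    (measurableSet_le hmeas.fst measurable_const).inter
      (measurableSet_le measurable_const hmeas.snd)
  have hS' : ∀ t, MeasurableSet[mΩ] (S t) := fun t => hm _ (hS t)
  letI : MeasurableSpace Ω := mΩ
  have hℓrw : (fun ω => ∑ t ∈ Finset.Icc (se ω).1 (se ω).2, ℓ t ω)
      = fun ω => ∑ t ∈ Finset.Icc 1 H, Set.indicator (S t) (ℓ t) ω :=
    funext (sum_interval_eq_indicator H se hadm ℓ)
  have hρrw : (fun ω => ∑ t ∈ Finset.Icc (se ω).1 (se ω).2, (μ[ℓ t | m]) ω)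
      = fun ω => ∑ t ∈ Finset.Icc 1 H, Set.indicator (S t) (μ[ℓ t | m]) ω :=
    funext (sum_interval_eq_indicator H se hadm (fun t => μ[ℓ t | m]))
  have hlenrw : (fun ω => (((se ω).2 + 1 - (se ω).1 : ℕ) : ℝ))
      = fun ω => ∑ t ∈ Finset.Icc 1 H, Set.indicator (S t) (fun _ => (1 : ℝ)) ω := by
    funext ω
    rw [len_eq_sum_one]
    exact sum_interval_eq_indicator H se hadm (fun _ _ => (1 : ℝ)) ω
  refine ⟨?_, ?_, ?_, ?_⟩
  · rw [hℓrw]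
    exact integrable_finset_sum _ (fun t ht => (hint t ht).indicator (hS' t))
  · rw [hρrw]
    exact integrable_finset_sum _ (fun t _ => integrable_condExp.indicator (hS' t))
  · rw [hlenrw]
    exact integrable_finset_sum _ (fun t _ => (integrable_const 1).indicator (hS' t))
  · rw [hℓrw, hρrw,
      integral_finset_sum _ (fun t _ => integrable_condExp.indicator (hS' t)),
      integral_finset_sum _ (fun t ht => (hint t ht).indicator (hS' t))]
    refine Finset.sum_congr rfl (fun t ht => ?_)
    rw [integral_indicator (hS' t), integral_indicator (hS' t)]
    exact setIntegral_condExp hm (hint t ht) (hS t)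


/-- **Optimality of the interval-abstention selection function (Theorem 3).**
Let `(Ω, ℱ, ℙ)` be a probability space, `𝒢 ⊆ ℱ` a sub-σ-algebra (`m ≤ mΩ`), `H ≥ 1`, and
`ℓ_1, …, ℓ_H : Ω → ℝ` nonnegative integrable losses, with conditional risks
`ρ_t = 𝔼[ℓ_t | 𝒢]`. A pair `(s, e)` with `s ∈ {1, …, H}`, `e ∈ {0, …, H}` is admissible if
`s ≤ e` or `(s, e) = (1, 0)`, with length `h(s,e) = e + 1 - s` (natural subtraction, so
`h(1,0) = 0`). Fix a target coverage `c ∈ (0,1]`. Suppose `(s*, e*)` is a `𝒢`-measurable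
admissible selection and `η* ≥ 0` is such that, with
`λ* = 𝔼[∑_{t=s*}^{e*} ℓ_t] / 𝔼[h(s*,e*)]` (assuming `𝔼[h(s*,e*)] > 0`) and `γ* = λ* + η*`:
(i) almost surely `(s* ω, e* ω)` minimizes `(s,e) ↦ ∑_{t=s}^{e} ρ_t ω - γ* * (e + 1 - s)`
over admissible pairs; (ii) `𝔼[h(s*,e*)] ≥ cH`; (iii) `η* * (𝔼[h(s*,e*)] - cH) = 0`.
Then every `𝒢`-measurable admissible selection `(s, e)` with `𝔼[h(s,e)] ≥ cH` satisfies
`λ* ≤ 𝔼[∑_{t=s}^{e} ℓ_t] / 𝔼[h(s,e)]`. -/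
theorem interval_abstention_optimal
    {Ω : Type*} {mΩ : MeasurableSpace Ω} (μ : Measure Ω) [IsProbabilityMeasure μ]
    (m : MeasurableSpace Ω) (hm : m ≤ mΩ)
    (H : ℕ) (hH : 1 ≤ H)
    (ℓ : ℕ → Ω → ℝ)
    (hnonneg : ∀ t ∈ Finset.Icc 1 H, ∀ ω, 0 ≤ ℓ t ω)
    (hint : ∀ t ∈ Finset.Icc 1 H, Integrable (ℓ t) μ)
    (c : ℝ) (hc0 : 0 < c) (hc1 : c ≤ 1)
    (ρ : ℕ → Ω → ℝ)
    (hρ : ρ = fun t => μ[ℓ t | m])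
    (sestar : Ω → ℕ × ℕ)
    (hsestar_meas : Measurable[m] sestar)
    (hsestar_adm : ∀ ω, 1 ≤ (sestar ω).1 ∧ (sestar ω).1 ≤ H ∧ (sestar ω).2 ≤ H ∧
      ((sestar ω).1 ≤ (sestar ω).2 ∨ sestar ω = (1, 0)))
    (hcovpos : 0 < ∫ ω, (((sestar ω).2 + 1 - (sestar ω).1 : ℕ) : ℝ) ∂μ)
    (ηstar lamstar γstar : ℝ)
    (hη : 0 ≤ ηstar)
    (hlam : lamstar
      = (∫ ω, ∑ t ∈ Finset.Icc (sestar ω).1 (sestar ω).2, ℓ t ω ∂μ)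
        / ∫ ω, (((sestar ω).2 + 1 - (sestar ω).1 : ℕ) : ℝ) ∂μ)
    (hγ : γstar = lamstar + ηstar)
    (hmin : ∀ᵐ ω ∂μ, ∀ s e : ℕ, 1 ≤ s → s ≤ H → e ≤ H → (s ≤ e ∨ (s, e) = (1, 0)) →
      (∑ t ∈ Finset.Icc (sestar ω).1 (sestar ω).2, ρ t ω)
          - γstar * (((sestar ω).2 + 1 - (sestar ω).1 : ℕ) : ℝ)
        ≤ (∑ t ∈ Finset.Icc s e, ρ t ω) - γstar * ((e + 1 - s : ℕ) : ℝ))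
    (hcov : c * H ≤ ∫ ω, (((sestar ω).2 + 1 - (sestar ω).1 : ℕ) : ℝ) ∂μ)
    (hslack : ηstar * ((∫ ω, (((sestar ω).2 + 1 - (sestar ω).1 : ℕ) : ℝ) ∂μ) - c * H) = 0) :
    ∀ se : Ω → ℕ × ℕ, Measurable[m] se →
      (∀ ω, 1 ≤ (se ω).1 ∧ (se ω).1 ≤ H ∧ (se ω).2 ≤ H ∧
        ((se ω).1 ≤ (se ω).2 ∨ se ω = (1, 0))) →
      c * H ≤ ∫ ω, (((se ω).2 + 1 - (se ω).1 : ℕ) : ℝ) ∂μ →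
      lamstar ≤ (∫ ω, ∑ t ∈ Finset.Icc (se ω).1 (se ω).2, ℓ t ω ∂μ)
        / ∫ ω, (((se ω).2 + 1 - (se ω).1 : ℕ) : ℝ) ∂μ := by
  subst hρ
  intro se hmeas hadm hcov'
  have hadm' : ∀ ω, 1 ≤ (se ω).1 ∧ (se ω).2 ≤ H :=
    fun ω => ⟨(hadm ω).1, (hadm ω).2.2.1⟩
  have hadmstar' : ∀ ω, 1 ≤ (sestar ω).1 ∧ (sestar ω).2 ≤ H :=
    fun ω => ⟨(hsestar_adm ω).1, (hsestar_adm ω).2.2.1⟩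
  obtain ⟨hIl₁, hIr₁, hIn₁, hsw₁⟩ :=
    integral_facts μ hm H ℓ hint sestar hsestar_meas hadmstar'
  obtain ⟨hIl₂, hIr₂, hIn₂, hsw₂⟩ := integral_facts μ hm H ℓ hint se hmeas hadm'
  set Astar := ∫ ω, ∑ t ∈ Finset.Icc (sestar ω).1 (sestar ω).2, ℓ t ω ∂μ with hAstar
  set hstar := ∫ ω, (((sestar ω).2 + 1 - (sestar ω).1 : ℕ) : ℝ) ∂μ with hhstar
  set A := ∫ ω, ∑ t ∈ Finset.Icc (se ω).1 (se ω).2, ℓ t ω ∂μ with hA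
  set h := ∫ ω, (((se ω).2 + 1 - (se ω).1 : ℕ) : ℝ) ∂μ with hh
  -- a.e. pointwise inequality for the selection `se`
  have hae : ∀ᵐ ω ∂μ,
      (∑ t ∈ Finset.Icc (sestar ω).1 (sestar ω).2, (μ[ℓ t | m]) ω)
          - γstar * (((sestar ω).2 + 1 - (sestar ω).1 : ℕ) : ℝ)
        ≤ (∑ t ∈ Finset.Icc (se ω).1 (se ω).2, (μ[ℓ t | m]) ω)
          - γstar * (((se ω).2 + 1 - (se ω).1 : ℕ) : ℝ) := by
    filter_upwards [hmin] with ω hω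
    refine hω (se ω).1 (se ω).2 (hadm ω).1 (hadm ω).2.1 (hadm ω).2.2.1 ?_
    rcases (hadm ω).2.2.2 with h1 | h1
    · exact Or.inl h1
    · exact Or.inr (by rw [← h1])
  -- integrate it
  have hintineq : Astar - γstar * hstar ≤ A - γstar * h := by
    have h1 := integral_mono_ae
      (hIr₁.sub (hIn₁.const_mul γstar)) (hIr₂.sub (hIn₂.const_mul γstar)) hae
    simp only [Pi.sub_apply] at h1
    rwa [integral_sub hIr₁ (hIn₁.const_mul γstar),
      integral_sub hIr₂ (hIn₂.const_mul γstar),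
      integral_const_mul, integral_const_mul, hsw₁, hsw₂] at h1
  have hHpos : (0 : ℝ) < c * H := by
    have : (1 : ℝ) ≤ (H : ℝ) := by exact_mod_cast hH
    positivity
  have hpos : 0 < h := lt_of_lt_of_le hHpos hcov'
  have hAstareq : Astar = lamstar * hstar := by
    rw [hlam]
    field_simp
  rw [le_div_iff₀ hpos]
  rcases mul_eq_zero.mp hslack with h0 | h0
  · -- ηstar = 0
    rw [h0, add_zero] at hγ
    nlinarith [hintineq, hAstareq]
  · -- hstar = c * H, so hstar ≤ h
    have hle : hstar ≤ h := by linarith [sub_eq_zero.mp h0, hcov']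
    nlinarith [hintineq, hAstareq, mul_nonneg hη (sub_nonneg.mpr hle)]
end
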